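/- Let A be a uniquely clean associative unital k-algebra and let A_t be a formal deformation of A, given by a sequence of k-bilinear maps αᵢ : A × A → A (α₀ the multiplication of A) making A[[t]] an associative unital k[[t]]-algebra with unit 1 via the product whose tᵏ-coefficient on (Σ aₙtⁿ)·(Σ bₚtᵖ) is Σ_{m+n+p=k} α_m(aₙ, bₚ). Then A_t is uniquely clean. -/

import Mathlib

/-!
Idempotents of a uniquely clean ring are central. Taking constant terms is a ring map
`ε : A_t → A`, and it reflects units: the coefficients of one-sided inverses of a series with
invertible constant term are solved for degree by degree. Likewise a central idempotent `e` of `A`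
lifts to exactly one idempotent `E` of `A_t`: in degree `n > 0` the equation `E² = E` reads
`e Eₙ + Eₙ e + Rₙ = Eₙ` with `Rₙ` depending only on lower coefficients, and since `1 - 2e` is a
central involution its only solution is `Eₙ = (1 - 2e) Rₙ`. A clean decomposition `ε x = e + u`
therefore lifts to `x = E + (x - E)`, and uniqueness descends from that in `A`.
-/

/-- A ring is uniquely clean if every element is the sum of an idempotent and a
unit in exactly one way. -/
def IsUniquelyCleanRing (R : Type*) [Ring R] : Prop :=
  ∀ a : R, ∃! p : R × R, IsIdempotentElem p.1 ∧ IsUnit p.2 ∧ a = p.1 + p.2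

open Finset

namespace IsIdempotentElem

variable {R : Type*} [Ring R] {e : R}

theorem one_sub_two_mul_mul_self (he : IsIdempotentElem e) : (1 - 2 * e) * (1 - 2 * e) = 1 := by
  have h : (1 - 2 * e) * (1 - 2 * e) = 1 - 4 * e + 4 * (e * e) := by noncomm_ring
  rw [h, he.eq]
  abel

theorem isUnit_one_sub_two_mul (he : IsIdempotentElem e) : IsUnit (1 - 2 * e) :=
  ⟨⟨_, _, he.one_sub_two_mul_mul_self, he.one_sub_two_mul_mul_self⟩, rfl⟩

theorem mul_add_mul_add_eq_iff (he : IsIdempotentElem e) {x y : R} (hx : Commute e x) :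
    e * x + x * e + y = x ↔ (1 - 2 * e) * y = x := by
  have hinv := he.one_sub_two_mul_mul_self
  have hx' : x - (e * x + x * e) = (1 - 2 * e) * x := by rw [← hx.eq]; noncomm_ring
  constructor
  · intro h
    rw [eq_sub_of_add_eq' h, hx', ← mul_assoc, hinv, one_mul]
  · rintro rfl
    rw [← eq_sub_iff_add_eq', hx', ← mul_assoc, hinv, one_mul]

end IsIdempotentElem

namespace IsUniquelyCleanRing

variable {R : Type*} [Ring R]

theorem eq_of_add_eq_add (hR : IsUniquelyCleanRing R) {e u f v : R}
    (he : IsIdempotentElem e) (hu : IsUnit u) (hf : IsIdempotentElem f) (hv : IsUnit v)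
    (h : e + u = f + v) : e = f ∧ u = v := by
  obtain ⟨p, -, hp⟩ := hR (e + u)
  exact Prod.ext_iff.mp ((hp (e, u) ⟨he, hu, rfl⟩).trans (hp (f, v) ⟨hf, hv, h⟩).symm)

/-- With `n = e r (1 - e)`, both `(e + n) + (1 - 2e)` and `e + (1 + n)(1 - 2e)` are clean
decompositions of the same element, so `e + n = e`. -/
theorem mul_mul_one_sub_eq_zero (hR : IsUniquelyCleanRing R) {e : R} (he : IsIdempotentElem e)
    (r : R) : e * r * (1 - e) = 0 := by
  set n := e * r * (1 - e) with hn
  have hen : e * n = n := by rw [hn, ← mul_assoc, ← mul_assoc, he.eq]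
  have hne : n * e = 0 := by rw [hn, mul_assoc, he.one_sub_mul_self, mul_zero]
  have hnn : n * n = 0 := by
    rw [show n * n = n * e * (r * (1 - e)) by rw [hn]; noncomm_ring, hne, zero_mul]
  have hidem : IsIdempotentElem (e + n) := by
    rw [IsIdempotentElem, add_mul, mul_add, mul_add, he.eq, hen, hne, hnn, add_zero, add_zero]
  have hunit : IsUnit ((1 + n) * (1 - 2 * e)) :=
    (IsNilpotent.isUnit_one_add ⟨2, by rw [sq, hnn]⟩).mul he.isUnit_one_sub_two_mul
  have hsum : e + n + (1 - 2 * e) = e + (1 + n) * (1 - 2 * e) := by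
    rw [show (1 + n) * (1 - 2 * e) = 1 - 2 * e + n - 2 * (n * e) by noncomm_ring, hne,
      mul_zero, sub_zero]
    abel
  have := (hR.eq_of_add_eq_add hidem he.isUnit_one_sub_two_mul he hunit hsum).1
  rwa [add_eq_left] at this

theorem commute_of_isIdempotentElem (hR : IsUniquelyCleanRing R) {e : R}
    (he : IsIdempotentElem e) (r : R) : Commute e r := by
  have h₁ := hR.mul_mul_one_sub_eq_zero he r
  have h₂ := hR.mul_mul_one_sub_eq_zero he.one_sub r
  rw [sub_sub_cancel] at h₂
  rw [mul_sub, mul_one, sub_eq_zero] at h₁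
  rw [sub_mul, sub_mul, one_mul, sub_eq_zero] at h₂
  exact h₁.trans h₂.symm

theorem of_isLocalHom {D : Type*} [Ring D] (ε : D →+* R) [IsLocalHom ε]
    (hlift : ∀ e : R, IsIdempotentElem e → ∃! E : D, IsIdempotentElem E ∧ ε E = e)
    (hR : IsUniquelyCleanRing R) : IsUniquelyCleanRing D := by
  intro x
  obtain ⟨⟨e, u⟩, ⟨he, hu, hx⟩, -⟩ := hR (ε x)
  obtain ⟨E, ⟨hE, rfl⟩, hEuniq⟩ := hlift e he
  refine ⟨(E, x - E), ⟨hE, isUnit_of_map_unit ε _ ?_, (add_sub_cancel E x).symm⟩, ?_⟩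
  · rwa [map_sub, hx, add_sub_cancel_left]
  · rintro ⟨P, V⟩ ⟨hP, hV, rfl⟩
    have hPE : ε P = ε E :=
      (hR.eq_of_add_eq_add (hP.map ε) (hV.map ε) he hu (by rw [← map_add, hx])).1
    obtain rfl := hEuniq P ⟨hP, hPE⟩
    simp

end IsUniquelyCleanRing

def IsCausal {M : Type*} (Φ : (ℕ → M) → ℕ → M) : Prop :=
  ∀ f g n, (∀ m < n, f m = g m) → Φ f n = Φ g n

theorem IsCausal.existsUnique_fixedPoint {M : Type*} [Nonempty M] {Φ : (ℕ → M) → ℕ → M}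
    (hΦ : IsCausal Φ) : ∃! f, Φ f = f := by
  classical
  let f : ℕ → M := Nat.strongRec fun n prev =>
    Φ (fun m => if h : m < n then prev m h else Classical.arbitrary M) n
  have hf : Φ f = f := by
    funext n
    rw [show f n = _ from Nat.strongRec_eq _ n]
    exact hΦ _ _ n fun m hm => by simp [hm, f]
  refine ⟨f, hf, fun g hg => funext fun n => ?_⟩
  induction n using Nat.strong_induction_on with
  | _ n ih =>
    calc g n = Φ g n := (congrFun hg n).symm
      _ = Φ f n := hΦ g f n ih
      _ = f n := congrFun hf n

theorem Finset.Nat.sum_antidiagonal_antidiagonal_eq {M : Type*} [AddCommMonoid M]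
    (F : ℕ → ℕ → ℕ → M) {n : ℕ} (hn : n ≠ 0) :
    ∑ x ∈ antidiagonal n, ∑ y ∈ antidiagonal x.2, F x.1 y.1 y.2 =
      F 0 0 n + F 0 n 0 + ∑ x ∈ antidiagonal n, ∑ y ∈ antidiagonal x.2,
        if y.1 < n ∧ y.2 < n then F x.1 y.1 y.2 else 0 := by
  have hsplit : ∀ x y : ℕ × ℕ, F x.1 y.1 y.2 =
      (if ¬(y.1 < n ∧ y.2 < n) then F x.1 y.1 y.2 else 0) +
        if y.1 < n ∧ y.2 < n then F x.1 y.1 y.2 else 0 := fun x y => by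
    split_ifs <;> simp
  rw [sum_congr rfl fun x _ => sum_congr rfl fun y _ => hsplit x y]
  simp only [sum_add_distrib]
  congr 1
  rw [sum_eq_single_of_mem (0, n) (by simp), ← sum_filter]
  · have hedge : {y ∈ antidiagonal n | ¬(y.1 < n ∧ y.2 < n)} = {(0, n), (n, 0)} := by
      ext y
      simp only [mem_filter, HasAntidiagonal.mem_antidiagonal, mem_insert, mem_singleton,
        Prod.ext_iff]
      omega
    rw [hedge, sum_pair (by simpa [eq_comm] using hn)]
  · intro x hx hx0
    refine sum_eq_zero fun y hy => if_neg ?_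
    rw [HasAntidiagonal.mem_antidiagonal] at hx hy
    have : x.1 ≠ 0 := fun h => hx0 (Prod.ext h (by simp; omega))
    omega

section DeformedProduct

variable {A : Type*} [Ring A] (α : ℕ → A → A → A)

/-- Coefficient `n` of the deformed product: `∑_{m + a + b = n} α m (f a) (g b)`. -/
def mulSeq (f g : ℕ → A) (n : ℕ) : A :=
  ∑ x ∈ antidiagonal n, ∑ y ∈ antidiagonal x.2, α x.1 (f y.1) (g y.2)

def lowerMulSeq (f g : ℕ → A) (n : ℕ) : A :=
  ∑ x ∈ antidiagonal n, ∑ y ∈ antidiagonal x.2,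
    if y.1 < n ∧ y.2 < n then α x.1 (f y.1) (g y.2) else 0

variable {α}

theorem lowerMulSeq_congr {f f' g g' : ℕ → A} {n : ℕ} (hf : ∀ m < n, f m = f' m)
    (hg : ∀ m < n, g m = g' m) : lowerMulSeq α f g n = lowerMulSeq α f' g' n :=
  sum_congr rfl fun _ _ => sum_congr rfl fun _ _ => by
    split_ifs with h
    · rw [hf _ h.1, hg _ h.2]
    · rfl

theorem mulSeq_apply_zero (hα0 : ∀ a b : A, α 0 a b = a * b) (f g : ℕ → A) :
    mulSeq α f g 0 = f 0 * g 0 := by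
  simp [mulSeq, hα0]

theorem mulSeq_apply_of_ne_zero (hα0 : ∀ a b : A, α 0 a b = a * b) (f g : ℕ → A) {n : ℕ}
    (hn : n ≠ 0) :
    mulSeq α f g n = f 0 * g n + f n * g 0 + lowerMulSeq α f g n := by
  rw [mulSeq, Finset.Nat.sum_antidiagonal_antidiagonal_eq (fun m a b => α m (f a) (g b)) hn,
    hα0, hα0, lowerMulSeq]

theorem exists_mulSeq_eq_single_of_mul_eq_one (hα0 : ∀ a b : A, α 0 a b = a * b) {f : ℕ → A}
    {v : A} (hv : f 0 * v = 1) :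
    ∃ g, mulSeq α f g = Pi.single 0 1 := by
  let Φ : (ℕ → A) → ℕ → A := fun g n =>
    if n = 0 then v else -(v * (f n * g 0 + lowerMulSeq α f g n))
  have hΦ : IsCausal Φ := fun g g' n h => by
    by_cases hn : n = 0
    · simp [Φ, hn]
    · simp only [Φ, if_neg hn, h 0 (Nat.pos_of_ne_zero hn),
        lowerMulSeq_congr (fun _ _ => rfl) h]
  obtain ⟨g, hg, -⟩ := hΦ.existsUnique_fixedPoint
  refine ⟨g, funext fun n => ?_⟩
  have hgn := congrFun hg n
  by_cases hn : n = 0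
  · subst hn
    simp only [Φ, if_pos] at hgn
    rw [mulSeq_apply_zero hα0, ← hgn, hv, Pi.single_eq_same]
  · simp only [Φ, if_neg hn] at hgn
    rw [mulSeq_apply_of_ne_zero hα0 _ _ hn, ← hgn, Pi.single_eq_of_ne hn, add_assoc, mul_neg,
      ← mul_assoc, hv, one_mul, neg_add_cancel]

theorem exists_mulSeq_eq_single_of_mul_eq_one' (hα0 : ∀ a b : A, α 0 a b = a * b) {f : ℕ → A}
    {v : A} (hv : v * f 0 = 1) :
    ∃ g, mulSeq α g f = Pi.single 0 1 := by
  let Φ : (ℕ → A) → ℕ → A := fun g n =>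
    if n = 0 then v else -((g 0 * f n + lowerMulSeq α g f n) * v)
  have hΦ : IsCausal Φ := fun g g' n h => by
    by_cases hn : n = 0
    · simp [Φ, hn]
    · simp only [Φ, if_neg hn, h 0 (Nat.pos_of_ne_zero hn),
        lowerMulSeq_congr h (fun _ _ => rfl)]
  obtain ⟨g, hg, -⟩ := hΦ.existsUnique_fixedPoint
  refine ⟨g, funext fun n => ?_⟩
  have hgn := congrFun hg n
  by_cases hn : n = 0
  · subst hn
    simp only [Φ, if_pos] at hgn
    rw [mulSeq_apply_zero hα0, ← hgn, hv, Pi.single_eq_same]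
  · simp only [Φ, if_neg hn] at hgn
    rw [mulSeq_apply_of_ne_zero hα0 _ _ hn, ← hgn, Pi.single_eq_of_ne hn, add_right_comm,
      neg_mul, mul_assoc, hv, mul_one, add_neg_cancel]

theorem existsUnique_mulSeq_self_eq_self (hα0 : ∀ a b : A, α 0 a b = a * b) {e : A}
    (he : IsIdempotentElem e) (hc : ∀ a, Commute e a) :
    ∃! g : ℕ → A, mulSeq α g g = g ∧ g 0 = e := by
  let Φ : (ℕ → A) → ℕ → A := fun g n => if n = 0 then e else (1 - 2 * e) * lowerMulSeq α g g n
  have hΦ : IsCausal Φ := fun g g' n h => by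
    by_cases hn : n = 0
    · simp [Φ, hn]
    · simp only [Φ, if_neg hn, lowerMulSeq_congr h h]
  have hfix : ∀ g : ℕ → A, mulSeq α g g = g ∧ g 0 = e ↔ Φ g = g := fun g => by
    refine ⟨fun ⟨hg, hg0⟩ => funext fun n => ?_, fun hg => ?_⟩
    · by_cases hn : n = 0
      · simp [Φ, hn, hg0]
      · have hgn := congrFun hg n
        rw [mulSeq_apply_of_ne_zero hα0 _ _ hn, hg0, he.mul_add_mul_add_eq_iff (hc _)] at hgn
        simpa [Φ, hn] using hgn
    · have hg0 : g 0 = e := by simpa [Φ] using (congrFun hg 0).symm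
      refine ⟨funext fun n => ?_, hg0⟩
      by_cases hn : n = 0
      · rw [hn, mulSeq_apply_zero hα0, hg0, he.eq]
      · rw [mulSeq_apply_of_ne_zero hα0 _ _ hn, hg0, he.mul_add_mul_add_eq_iff (hc _)]
        simpa [Φ, hn] using congrFun hg n
  simpa only [hfix] using hΦ.existsUnique_fixedPoint

end DeformedProduct

noncomputable def PowerSeries.mkAddEquiv (A : Type*) [Semiring A] :
    (ℕ → A) ≃+ PowerSeries A where
  toFun := PowerSeries.mk
  invFun p n := PowerSeries.coeff n p
  left_inv f := funext fun n => PowerSeries.coeff_mk n f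
  right_inv p := PowerSeries.ext fun n => PowerSeries.coeff_mk n _
  map_add' f g := PowerSeries.ext fun n => by simp

/-- `φ` identifies `D` with `A[[t]]`, power series being read as coefficient sequences,
carrying the deformed product with components `α i`. -/
structure IsFormalDeformation {A D : Type*} [Ring A] [Ring D] (α : ℕ → A → A → A)
    (φ : (ℕ → A) ≃+ D) : Prop where
  alpha_zero : ∀ a b, α 0 a b = a * b
  map_mul : ∀ f g, φ f * φ g = φ (mulSeq α f g)
  map_one : φ (Pi.single 0 1) = 1

namespace IsFormalDeformation

variable {A D : Type*} [Ring A] [Ring D] {α : ℕ → A → A → A} {φ : (ℕ → A) ≃+ D}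

def constCoeff (h : IsFormalDeformation α φ) : D →+* A where
  toFun d := φ.symm d 0
  map_one' := by rw [← h.map_one, φ.symm_apply_apply, Pi.single_eq_same]
  map_mul' x y := by
    obtain ⟨f, rfl⟩ := φ.surjective x
    obtain ⟨g, rfl⟩ := φ.surjective y
    simp only [h.map_mul, φ.symm_apply_apply, mulSeq_apply_zero h.alpha_zero]
  map_zero' := by simp
  map_add' x y := by simp

theorem constCoeff_apply (h : IsFormalDeformation α φ) (f : ℕ → A) :
    h.constCoeff (φ f) = f 0 := by
  simp [constCoeff]

theorem isLocalHom_constCoeff (h : IsFormalDeformation α φ) : IsLocalHom h.constCoeff := by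
  refine ⟨fun d hd => ?_⟩
  obtain ⟨f, rfl⟩ := φ.surjective d
  obtain ⟨u, hu⟩ := hd
  rw [constCoeff_apply] at hu
  obtain ⟨g, hg⟩ := exists_mulSeq_eq_single_of_mul_eq_one h.alpha_zero (f := f) (v := ↑u⁻¹)
    (by rw [← hu, u.mul_inv])
  obtain ⟨g', hg'⟩ := exists_mulSeq_eq_single_of_mul_eq_one' h.alpha_zero (f := f) (v := ↑u⁻¹)
    (by rw [← hu, u.inv_mul])
  exact isUnit_iff_exists_and_exists.mpr
    ⟨⟨φ g, by rw [h.map_mul, hg, h.map_one]⟩, ⟨φ g', by rw [h.map_mul, hg', h.map_one]⟩⟩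

theorem existsUnique_isIdempotentElem_constCoeff_eq (h : IsFormalDeformation α φ) {e : A}
    (he : IsIdempotentElem e) (hc : ∀ a, Commute e a) :
    ∃! E : D, IsIdempotentElem E ∧ h.constCoeff E = e := by
  refine (φ.toEquiv.existsUnique_congr fun g => ?_).mp
    (existsUnique_mulSeq_self_eq_self h.alpha_zero he hc)
  rw [AddEquiv.toEquiv_eq_coe, AddEquiv.coe_toEquiv, IsIdempotentElem, h.map_mul,
    φ.injective.eq_iff, constCoeff_apply]

end IsFormalDeformation

theorem uniquelyClean_of_formal_deformation_general
    {A D : Type*} [Ring A] [Ring D]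
    (α : ℕ → A → A → A)
    (hα0 : ∀ a b : A, α 0 a b = a * b)
    (ι : PowerSeries A ≃ D)
    (hadd : ∀ p q : PowerSeries A, ι (p + q) = ι p + ι q)
    (hmul : ∀ p q : PowerSeries A,
      ι p * ι q = ι (PowerSeries.mk fun n : ℕ =>
        ∑ x ∈ Finset.HasAntidiagonal.antidiagonal n, ∑ y ∈ Finset.HasAntidiagonal.antidiagonal x.2,
          α x.1 (PowerSeries.coeff (R := A) y.1 p) (PowerSeries.coeff (R := A) y.2 q)))
    (hone : ι 1 = 1)
    (hA : IsUniquelyCleanRing A) :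
    IsUniquelyCleanRing D := by
  let φ : (ℕ → A) ≃+ D := (PowerSeries.mkAddEquiv A).trans { ι with map_add' := hadd }
  have hφ : IsFormalDeformation α φ :=
    { alpha_zero := hα0
      map_mul := fun f g => by simp [φ, PowerSeries.mkAddEquiv, hmul]; rfl
      map_one := by
        rw [← hone]
        exact congrArg ι (PowerSeries.ext fun n => by
          simp [PowerSeries.mkAddEquiv, PowerSeries.coeff_one, Pi.single_apply]) }
  have := hφ.isLocalHom_constCoeff
  exact hA.of_isLocalHom hφ.constCoeff fun e he =>
    hφ.existsUnique_isIdempotentElem_constCoeff_eq he (hA.commute_of_isIdempotentElem he)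

/-- Let `A` be a uniquely clean associative unital `k`-algebra and `A_t`
a formal deformation of `A`: the `k[[t]]`-module `A[[t]]` (encoded as a ring `D`
identified with `PowerSeries A` via the bijection `ι`) with multiplication determined by
`k`-bilinear maps `αᵢ : A × A → A` (with `α₀` the multiplication of `A`) via the formula
that the `tᵏ`-coefficient of the product of `Σ aₙtⁿ` and `Σ bₚtᵖ` is
`Σ_{m+n+p=k} α_m(aₙ, bₚ)`; the unit is the constant power series `1`.
Then `A_t` is uniquely clean. -/
theorem uniquelyClean_of_formal_deformation
    {k A D : Type*} [CommRing k] [Ring A] [Algebra k A] [Ring D]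
    (α : ℕ → A → A → A)
    (hα0 : ∀ a b : A, α 0 a b = a * b)
    (haddl : ∀ (i : ℕ) (a a' b : A), α i (a + a') b = α i a b + α i a' b)
    (haddr : ∀ (i : ℕ) (a b b' : A), α i a (b + b') = α i a b + α i a b')
    (hsmull : ∀ (i : ℕ) (c : k) (a b : A), α i (c • a) b = c • α i a b)
    (hsmulr : ∀ (i : ℕ) (c : k) (a b : A), α i a (c • b) = c • α i a b)
    (ι : PowerSeries A ≃ D)
    (hadd : ∀ p q : PowerSeries A, ι (p + q) = ι p + ι q)
    (hmul : ∀ p q : PowerSeries A,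
      ι p * ι q = ι (PowerSeries.mk fun n : ℕ =>
        ∑ x ∈ Finset.HasAntidiagonal.antidiagonal n, ∑ y ∈ Finset.HasAntidiagonal.antidiagonal x.2,
          α x.1 (PowerSeries.coeff (R := A) y.1 p) (PowerSeries.coeff (R := A) y.2 q)))
    (hone : ι 1 = 1)
    (hA : IsUniquelyCleanRing A) :
    IsUniquelyCleanRing D :=
  uniquelyClean_of_formal_deformation_general α hα0 ι hadd hmul hone hA
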